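/- Let G be a simple graph and u a vertex of G that has at least two pure branches of length 2 attached: paths u,v_1,v_2 and u,v_3,v_4 with v_2, v_4 leaves and v_1, v_3 of degree 2, all of v_1,v_2,v_3,v_4 distinct. Let H be the induced subgraph of G on V(G) \ {v_1, v_2}. Then τ_max(H) ≤ τ_max(G) − 1. -/

import Mathlib

/-- `C` is a vertex cover of the graph `G`. -/
def gIsCover {V : Type} (G : SimpleGraph V) (C : Finset V) : Prop :=
  ∀ ⦃x y⦄, G.Adj x y → x ∈ C ∨ y ∈ C

/-- `C` is a minimal vertex cover of `G`. -/
def gIsMinCover {V : Type} (G : SimpleGraph V) (C : Finset V) : Prop :=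
  gIsCover G C ∧ ∀ D ⊂ C, ¬ gIsCover G D

/-- `τ_max(G)`: the maximum cardinality of a minimal vertex cover of `G`. -/
noncomputable def gTauMax {V : Type} (G : SimpleGraph V) : ℕ :=
  sSup {m | ∃ C : Finset V, gIsMinCover G C ∧ C.card = m}

/-- The subgraph of `G` induced on the vertex subset `s` (kept on the same ambient
vertex type: all vertices outside `s` become isolated, which does not affect
minimal vertex covers). -/
def SimpleGraph.restrict {V : Type} (G : SimpleGraph V) (s : Set V) : SimpleGraph V where
  Adj x y := G.Adj x y ∧ x ∈ s ∧ y ∈ s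
  symm := ⟨fun x y ⟨h, hx, hy⟩ => ⟨h.symm, hy, hx⟩⟩
  loopless := ⟨fun x ⟨h, _, _⟩ => G.loopless.irrefl x h⟩

/-
Every minimal vertex cover of `H = G - {v₁, v₂}` avoids the isolated vertices `v₁, v₂`. Adding
`v₁` to a largest one gives a cover of `G` that is still minimal: `v₁` is the only cover vertex
on the edge `v₁v₂`, and every other cover vertex keeps its private neighbour from `H`, which
is not `v₁`. Hence `τ_max(G) ≥ τ_max(H) + 1`.
-/

section

variable {V : Type} {G : SimpleGraph V}

lemma gIsMinCover_iff_forall_exists_adj_notMem [DecidableEq V] {C : Finset V} :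
    gIsMinCover G C ↔ gIsCover G C ∧ ∀ c ∈ C, ∃ y, G.Adj c y ∧ y ∉ C := by
  refine ⟨fun hC => ⟨hC.1, fun c hc => ?_⟩, fun ⟨hcov, hpriv⟩ => ⟨hcov, fun D hDC hD => ?_⟩⟩
  · by_contra! hall
    refine hC.2 (C.erase c) (Finset.erase_ssubset hc) fun x y hxy => ?_
    by_cases hx : x = c
    · subst hx
      exact Or.inr (Finset.mem_erase.mpr ⟨hxy.ne', hall y hxy⟩)
    by_cases hy : y = c
    · subst hy
      exact Or.inl (Finset.mem_erase.mpr ⟨hxy.ne, hall x hxy.symm⟩)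
    exact (hC.1 hxy).imp (fun h => Finset.mem_erase.mpr ⟨hx, h⟩)
      (fun h => Finset.mem_erase.mpr ⟨hy, h⟩)
  · obtain ⟨c, hcC, hcD⟩ := Finset.exists_of_ssubset hDC
    obtain ⟨y, hcy, hyC⟩ := hpriv c hcC
    exact (hD hcy).elim hcD fun hyD => hyC (hDC.subset hyD)

lemma gIsCover.exists_gIsMinCover_subset {C : Finset V} (hC : gIsCover G C) :
    ∃ D ⊆ C, gIsMinCover G D := by
  induction C using Finset.strongInduction with
  | H C ih =>
    by_cases hsmaller : ∃ D ⊂ C, gIsCover G D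
    · obtain ⟨D, hDC, hD⟩ := hsmaller
      obtain ⟨E, hED, hE⟩ := ih D hDC hD
      exact ⟨E, hED.trans hDC.subset, hE⟩
    · exact ⟨C, subset_rfl, hC, fun D hDC hD => hsmaller ⟨D, hDC, hD⟩⟩

lemma bddAbove_gIsMinCover_card [Fintype V] (G : SimpleGraph V) :
    BddAbove {m | ∃ C : Finset V, gIsMinCover G C ∧ C.card = m} :=
  ⟨Fintype.card V, by rintro m ⟨D, -, rfl⟩; exact D.card_le_univ⟩

lemma exists_gIsMinCover_card_eq_gTauMax [Fintype V] (G : SimpleGraph V) :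
    ∃ C, gIsMinCover G C ∧ C.card = gTauMax G := by
  obtain ⟨C, -, hC⟩ := (show gIsCover G Finset.univ from
    fun x _ _ => Or.inl (Finset.mem_univ x)).exists_gIsMinCover_subset
  exact Nat.sSup_mem (s := {m | ∃ C, gIsMinCover G C ∧ C.card = m}) ⟨C.card, C, hC, rfl⟩
    (bddAbove_gIsMinCover_card G)

lemma gIsMinCover.card_le_gTauMax [Fintype V] {C : Finset V} (hC : gIsMinCover G C) :
    C.card ≤ gTauMax G :=
  le_csSup (bddAbove_gIsMinCover_card G) ⟨C, hC, rfl⟩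

lemma gIsMinCover.subset_of_restrict [DecidableEq V] {s : Set V} {C : Finset V}
    (hC : gIsMinCover (G.restrict s) C) : (C : Set V) ⊆ s := fun c hc =>
  have ⟨_, hcy, _⟩ := (gIsMinCover_iff_forall_exists_adj_notMem.mp hC).2 c hc
  hcy.2.1

lemma gIsMinCover.insert_of_restrict_leaf [DecidableEq V] {v₁ v₂ : V} {C : Finset V}
    (hC : gIsMinCover (G.restrict {x | x ≠ v₁ ∧ x ≠ v₂}) C) (hadj : G.Adj v₁ v₂)
    (hleaf : ∀ x, G.Adj v₂ x → x = v₁) :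
    gIsMinCover G (insert v₁ C) := by
  have hCs := hC.subset_of_restrict
  rw [gIsMinCover_iff_forall_exists_adj_notMem] at hC ⊢
  refine ⟨fun x y hxy => ?_, fun c hc => ?_⟩
  · by_cases hx : x = v₁
    · exact Or.inl (hx ▸ Finset.mem_insert_self _ _)
    by_cases hy : y = v₁
    · exact Or.inr (hy ▸ Finset.mem_insert_self _ _)
    have hx₂ : x ≠ v₂ := fun h => hy (hleaf y (h ▸ hxy))
    have hy₂ : y ≠ v₂ := fun h => hx (hleaf x (h ▸ hxy.symm))
    exact (hC.1 ⟨hxy, ⟨hx, hx₂⟩, ⟨hy, hy₂⟩⟩).imp (Finset.mem_insert_of_mem ·)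
      (Finset.mem_insert_of_mem ·)
  rcases Finset.mem_insert.mp hc with rfl | hc
  · refine ⟨v₂, hadj, ?_⟩
    rw [Finset.mem_insert, not_or]
    exact ⟨hadj.ne', fun h => (hCs h).2 rfl⟩
  · obtain ⟨y, hcy, hyC⟩ := hC.2 c hc
    exact ⟨y, hcy.1, Finset.mem_insert.not.mpr (not_or.mpr ⟨hcy.2.2.1, hyC⟩)⟩

end

theorem stmt_6_general {V : Type} [Fintype V] [DecidableEq V] (G : SimpleGraph V)
    [DecidableRel G.Adj] (v1 v2 : V)
    (h2 : G.Adj v1 v2)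
    (hd2 : G.degree v2 = 1) :
    gTauMax (G.restrict {x | x ≠ v1 ∧ x ≠ v2}) + 1 ≤ gTauMax G := by
  have hleaf : ∀ x, G.Adj v2 x → x = v1 := fun x hx =>
    (G.degree_eq_one_iff_existsUnique_adj.mp hd2).unique hx h2.symm
  obtain ⟨C, hC, hCcard⟩ := exists_gIsMinCover_card_eq_gTauMax (G.restrict {x | x ≠ v1 ∧ x ≠ v2})
  have hv1 : v1 ∉ C := fun h => (hC.subset_of_restrict h).1 rfl
  calc gTauMax (G.restrict {x | x ≠ v1 ∧ x ≠ v2}) + 1 = (insert v1 C).card := by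
        rw [Finset.card_insert_of_notMem hv1, hCcard]
    _ ≤ gTauMax G := (hC.insert_of_restrict_leaf h2 hleaf).card_le_gTauMax

/-- If `u` has two pure branches of length 2, `u,v₁,v₂` and `u,v₃,v₄`
(`v₂, v₄` leaves, `v₁, v₃` of degree 2, all distinct), and `H` is the induced subgraph
on `V(G) \ {v₁, v₂}`, then `τ_max(H) ≤ τ_max(G) - 1`. -/
theorem stmt_6 {V : Type} [Fintype V] [DecidableEq V] (G : SimpleGraph V)
    [DecidableRel G.Adj] (u v1 v2 v3 v4 : V)
    (hdist : v1 ≠ v2 ∧ v1 ≠ v3 ∧ v1 ≠ v4 ∧ v2 ≠ v3 ∧ v2 ≠ v4 ∧ v3 ≠ v4)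
    (h1 : G.Adj u v1) (h2 : G.Adj v1 v2) (h3 : G.Adj u v3) (h4 : G.Adj v3 v4)
    (hd2 : G.degree v2 = 1) (hd4 : G.degree v4 = 1)
    (hd1 : G.degree v1 = 2) (hd3 : G.degree v3 = 2) :
    gTauMax (G.restrict {x | x ≠ v1 ∧ x ≠ v2}) + 1 ≤ gTauMax G :=
  stmt_6_general G v1 v2 h2 hd2
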